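/- arXiv:2305.12370 — 2 statements merged into one kernel-verified Lean document; each statement's English description precedes it below -/
import Mathlib

section
/- On T*ℝ⁴, with M₁ = J₁₂ + J₃₄ and M₂ = J₁₂ + J₁₃ + J₂₄, one has {M₁, M₂} = 0, and the function V₂(q) = q₁² - 4q₁q₄ + q₂² + 4q₂q₃ - q₃² - q₄² Poisson-commutes with both M₁ and M₂. -/
noncomputable def pb {n : ℕ} (f g : (Fin n → ℝ) × (Fin n → ℝ) → ℝ)
    (x : (Fin n → ℝ) × (Fin n → ℝ)) : ℝ :=
  ∑ i : Fin n,
    (fderiv ℝ f x (Pi.single i 1, 0) * fderiv ℝ g x (0, Pi.single i 1)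
      - fderiv ℝ f x (0, Pi.single i 1) * fderiv ℝ g x (Pi.single i 1, 0))

noncomputable def J (i j : Fin 4) : (Fin 4 → ℝ) × (Fin 4 → ℝ) → ℝ :=
  fun x => x.1 i * x.2 j - x.1 j * x.2 i

noncomputable def M1 : (Fin 4 → ℝ) × (Fin 4 → ℝ) → ℝ := fun x => J 0 1 x + J 2 3 x
noncomputable def M2 : (Fin 4 → ℝ) × (Fin 4 → ℝ) → ℝ := fun x => J 0 1 x + J 0 2 x + J 1 3 x
noncomputable def V2 : (Fin 4 → ℝ) × (Fin 4 → ℝ) → ℝ :=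
  fun x => (x.1 0)^2 - 4 * x.1 0 * x.1 3 + (x.1 1)^2 + 4 * x.1 1 * x.1 2
    - (x.1 2)^2 - (x.1 3)^2

/-
Under so(4) ≅ so(3) ⊕ so(3), M₁ = J₁₂ + J₃₄ is self-dual while M₂ - M₁/2 = (J₁₂ - J₃₄)/2 + J₁₃ + J₂₄
is anti-self-dual, and the two factors Poisson-commute. V₂ = qᵀAq is invariant under the rotations
generated by M₁ and M₂ because A commutes with their antisymmetric generator matrices. Concretely,
every bracket is a polynomial identity read off from the explicit differentials of Jᵢⱼ and V₂.
-/

section PhaseSpace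

variable {n : ℕ} (x v : (Fin n → ℝ) × (Fin n → ℝ))

theorem fderiv_fst_apply_apply (i : Fin n) :
    fderiv ℝ (fun y : (Fin n → ℝ) × (Fin n → ℝ) => y.1 i) x v = v.1 i :=
  congrArg (· v) ((ContinuousLinearMap.proj i).comp (ContinuousLinearMap.fst ℝ _ _)).fderiv

theorem fderiv_snd_apply_apply (i : Fin n) :
    fderiv ℝ (fun y : (Fin n → ℝ) × (Fin n → ℝ) => y.2 i) x v = v.2 i :=
  congrArg (· v) ((ContinuousLinearMap.proj i).comp (ContinuousLinearMap.snd ℝ _ _)).fderiv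

end PhaseSpace

section Coordinates

variable (x v : (Fin 4 → ℝ) × (Fin 4 → ℝ))

theorem differentiable_J (i j : Fin 4) : Differentiable ℝ (J i j) := by
  unfold J; fun_prop

theorem fderiv_J_apply (i j : Fin 4) :
    fderiv ℝ (J i j) x v = v.1 i * x.2 j + x.1 i * v.2 j - (v.1 j * x.2 i + x.1 j * v.2 i) := by
  unfold J
  simp (disch := fun_prop) only [fderiv_fun_sub, fderiv_fun_mul, sub_apply, add_apply,
    smul_apply, smul_eq_mul, fderiv_fst_apply_apply, fderiv_snd_apply_apply]
  ring

theorem fderiv_M1_apply : fderiv ℝ M1 x v = fderiv ℝ (J 0 1) x v + fderiv ℝ (J 2 3) x v := by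
  rw [show M1 = J 0 1 + J 2 3 from rfl, fderiv_add (differentiable_J 0 1 x) (differentiable_J 2 3 x)]
  rfl

theorem fderiv_M2_apply :
    fderiv ℝ M2 x v = fderiv ℝ (J 0 1) x v + fderiv ℝ (J 0 2) x v + fderiv ℝ (J 1 3) x v := by
  have h01 := differentiable_J 0 1 x
  have h02 := differentiable_J 0 2 x
  rw [show M2 = J 0 1 + J 0 2 + J 1 3 from rfl, fderiv_add (h01.add h02) (differentiable_J 1 3 x),
    fderiv_add h01 h02]
  rfl

theorem fderiv_V2_apply : fderiv ℝ V2 x v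
      = 2 * (x.1 0 - 2 * x.1 3) * v.1 0 + 2 * (x.1 1 + 2 * x.1 2) * v.1 1
        + 2 * (2 * x.1 1 - x.1 2) * v.1 2 - 2 * (2 * x.1 0 + x.1 3) * v.1 3 := by
  unfold V2
  simp (disch := fun_prop) only [fderiv_fun_sub, fderiv_fun_mul, fderiv_fun_add, fderiv_fun_pow,
    fderiv_fun_const, Pi.zero_apply, zero_apply, sub_apply, add_apply, smul_apply, smul_eq_mul,
    fderiv_fst_apply_apply]
  ring

end Coordinates

theorem triple_rotation :
    (∀ x, pb M1 M2 x = 0) ∧ (∀ x, pb V2 M1 x = 0) ∧ (∀ x, pb V2 M2 x = 0) := by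
  refine ⟨fun x => ?_, fun x => ?_, fun x => ?_⟩ <;>
  · simp only [pb, Fin.sum_univ_four, fderiv_M1_apply, fderiv_M2_apply, fderiv_V2_apply,
      fderiv_J_apply, Pi.single_apply, Pi.zero_apply, Fin.isValue, Fin.reduceEq, ↓reduceIte]
    ring
end

section
/- For arbitrary differentiable functions f₁, f₂ : ℝ → ℝ, the functions H = P₁ + f₁(Q₁+Q₂) + f₂(Q₁-Q₂) and G = P₂ + f₁(Q₁+Q₂) - f₂(Q₁-Q₂) on T*ℝ³ Poisson-commute, where Q₁ = q₁²+q₂²+q₃², Q₂ = q₁²+q₂²-q₃², P₁ = p₁²+p₂²+p₃², P₂ = p₁²+p₂²-p₃². -/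
noncomputable def Q1 : (Fin 3 → ℝ) × (Fin 3 → ℝ) → ℝ :=
  fun x => (x.1 0)^2 + (x.1 1)^2 + (x.1 2)^2
noncomputable def Q2 : (Fin 3 → ℝ) × (Fin 3 → ℝ) → ℝ :=
  fun x => (x.1 0)^2 + (x.1 1)^2 - (x.1 2)^2
noncomputable def P1 : (Fin 3 → ℝ) × (Fin 3 → ℝ) → ℝ :=
  fun x => (x.2 0)^2 + (x.2 1)^2 + (x.2 2)^2
noncomputable def P2 : (Fin 3 → ℝ) × (Fin 3 → ℝ) → ℝ :=
  fun x => (x.2 0)^2 + (x.2 1)^2 - (x.2 2)^2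

/-!
With `A = (P₁ + P₂)/2 + f₁(Q₁ + Q₂)` and `B = (P₁ - P₂)/2 + f₂(Q₁ - Q₂)` we have `H = A + B` and
`G = A - B`, so `{H, G} = 2 {B, A}` by bilinearity and antisymmetry. Since `Q₁ + Q₂ = 2(q₁² + q₂²)`,
`Q₁ - Q₂ = 2q₃²` and likewise for the momenta, `A` depends only on the canonical pairs
`(q₁, p₁), (q₂, p₂)` and `B` only on `(q₃, p₃)` (indices `0, 1, 2 : Fin 3`), hence `{B, A} = 0`.
-/

theorem fderiv_apply_eq_zero_of_forall_add_smul_eq {E F : Type*} [NormedAddCommGroup E]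
    [NormedSpace ℝ E] [NormedAddCommGroup F] [NormedSpace ℝ F] {f : E → F} {x v : E}
    (h : ∀ t : ℝ, f (x + t • v) = f x) :
    fderiv ℝ f x v = 0 := by
  by_cases hf : DifferentiableAt ℝ f x
  · rw [← hf.lineDeriv_eq_fderiv, lineDeriv]
    simp only [h, deriv_const]
  · simp [fderiv_zero_of_not_differentiableAt hf]

section PoissonBracket

variable {n : ℕ}

def IndepOfPair (f : (Fin n → ℝ) × (Fin n → ℝ) → ℝ) (i : Fin n) : Prop :=
  ∀ y (t : ℝ), f (y + t • (Pi.single i 1, 0)) = f y ∧ f (y + t • (0, Pi.single i 1)) = f y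

theorem pb_eq_zero_of_forall_indepOfPair {f g : (Fin n → ℝ) × (Fin n → ℝ) → ℝ}
    (h : ∀ i, IndepOfPair f i ∨ IndepOfPair g i) (x : (Fin n → ℝ) × (Fin n → ℝ)) :
    pb f g x = 0 := by
  refine Finset.sum_eq_zero fun i _ => ?_
  rcases h i with hi | hi <;>
  · rw [fderiv_apply_eq_zero_of_forall_add_smul_eq fun t => (hi x t).1,
      fderiv_apply_eq_zero_of_forall_add_smul_eq fun t => (hi x t).2]
    ring

theorem pb_add_sub {f g : (Fin n → ℝ) × (Fin n → ℝ) → ℝ} {x : (Fin n → ℝ) × (Fin n → ℝ)}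
    (hf : DifferentiableAt ℝ f x) (hg : DifferentiableAt ℝ g x) :
    pb (fun y => f y + g y) (fun y => f y - g y) x = 2 * pb g f x := by
  rw [pb, pb, fderiv_fun_add hf hg, fderiv_fun_sub hf hg, Finset.mul_sum]
  refine Finset.sum_congr rfl fun i _ => ?_
  simp only [add_apply, sub_apply]
  ring

end PoissonBracket

noncomputable def halfSum (f1 : ℝ → ℝ) : (Fin 3 → ℝ) × (Fin 3 → ℝ) → ℝ :=
  fun y => (P1 y + P2 y) / 2 + f1 (Q1 y + Q2 y)

noncomputable def halfDiff (f2 : ℝ → ℝ) : (Fin 3 → ℝ) × (Fin 3 → ℝ) → ℝ :=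
  fun y => (P1 y - P2 y) / 2 + f2 (Q1 y - Q2 y)

theorem halfSum_apply (f1 : ℝ → ℝ) (y : (Fin 3 → ℝ) × (Fin 3 → ℝ)) :
    halfSum f1 y = (y.2 0)^2 + (y.2 1)^2 + f1 (2 * ((y.1 0)^2 + (y.1 1)^2)) := by
  simp only [halfSum, P1, P2, Q1, Q2]
  ring_nf

theorem halfDiff_apply (f2 : ℝ → ℝ) (y : (Fin 3 → ℝ) × (Fin 3 → ℝ)) :
    halfDiff f2 y = (y.2 2)^2 + f2 (2 * (y.1 2)^2) := by
  simp only [halfDiff, P1, P2, Q1, Q2]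
  ring_nf

theorem indepOfPair_halfSum (f1 : ℝ → ℝ) : IndepOfPair (halfSum f1) 2 := by
  intro y t
  simp [halfSum_apply]

theorem indepOfPair_halfDiff (f2 : ℝ → ℝ) {i : Fin 3} (hi : i ≠ 2) :
    IndepOfPair (halfDiff f2) i := by
  intro y t
  simp [halfDiff_apply, hi.symm]

theorem differentiable_halfSum {f1 : ℝ → ℝ} (hf1 : Differentiable ℝ f1) :
    Differentiable ℝ (halfSum f1) := by
  unfold halfSum P1 P2 Q1 Q2; fun_prop

theorem differentiable_halfDiff {f2 : ℝ → ℝ} (hf2 : Differentiable ℝ f2) :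
    Differentiable ℝ (halfDiff f2) := by
  unfold halfDiff P1 P2 Q1 Q2; fun_prop

theorem separable_commute (f1 f2 : ℝ → ℝ) (hf1 : Differentiable ℝ f1)
    (hf2 : Differentiable ℝ f2) :
    ∀ x, pb (fun x => P1 x + f1 (Q1 x + Q2 x) + f2 (Q1 x - Q2 x))
            (fun x => P2 x + f1 (Q1 x + Q2 x) - f2 (Q1 x - Q2 x)) x = 0 := by
  intro x
  have hH : (fun x => P1 x + f1 (Q1 x + Q2 x) + f2 (Q1 x - Q2 x))
      = fun y => halfSum f1 y + halfDiff f2 y := by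
    funext y; simp only [halfSum, halfDiff]; ring
  have hG : (fun x => P2 x + f1 (Q1 x + Q2 x) - f2 (Q1 x - Q2 x))
      = fun y => halfSum f1 y - halfDiff f2 y := by
    funext y; simp only [halfSum, halfDiff]; ring
  have hsep : pb (halfDiff f2) (halfSum f1) x = 0 := by
    refine pb_eq_zero_of_forall_indepOfPair (fun i => ?_) x
    by_cases hi : i = 2
    · exact .inr (hi ▸ indepOfPair_halfSum f1)
    · exact .inl (indepOfPair_halfDiff f2 hi)
  rw [hH, hG, pb_add_sub (differentiable_halfSum hf1 x) (differentiable_halfDiff hf2 x), hsep,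
    mul_zero]
end
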